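/- Fix an integer r ≥ 2 and let {F_n^{(r)}} be the generalized r-step Fibonacci numbers defined by F_n^{(r)} = F_{n−1}^{(r)} + F_{n−2}^{(r)} + ⋯ + F_{n−r}^{(r)} for n ≥ r, with F_0^{(r)} = ⋯ = F_{r−2}^{(r)} = 0 and F_{r−1}^{(r)} = 1. For every integer n ≥ 1, the Toeplitz–Hessenberg determinant det(−1; F_0^{(r)}, F_1^{(r)}, …, F_{n−1}^{(r)}) equals ⌊(2^n + 2^r − 2)/(2^{r+1} − 2)⌋. -/

import Mathlib

/-!
Expanding along the first row, `D n := det(-1; a_1, …, a_n)` satisfies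
`D (n + 1) = ∑ i ≤ n, a_(i+1) D (n - i)`, i.e. `D(x) (1 - x F(x)) = 1` for the generating
functions of `D` and of `F`, where `a_(i+1) = F_i`. The recurrence of `F` says
`F(x) (1 - x - ⋯ - x^r) = x^(r-1)`, and eliminating `F(x)` gives
`D(x) (1 - 2x) (1 - x^r) = 1 - 2x + x^(r+1)`. Hence `D m = [m = r]` for `1 ≤ m ≤ r` and
`D (n + r) = D n + 2^(n-1)` for `n ≥ 1`; the floor expression obeys the same initial values
and the same `r`-step recurrence.
-/

/-- The determinant of the `n × n` Toeplitz–Hessenberg matrix whose `(i,j)` entry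
(0-indexed) is `a (i - j + 1)` when `j ≤ i + 1` (so `a 0` lies on the superdiagonal
and `a k` on the `k`-th subdiagonal) and `0` otherwise. -/
def THdet (a : ℕ → ℤ) (n : ℕ) : ℤ :=
  (Matrix.of fun i j : Fin n => if (j : ℕ) ≤ (i : ℕ) + 1 then a ((i : ℕ) + 1 - (j : ℕ)) else 0).det

open Finset Matrix PowerSeries

/-- Deleting row `0` and column `1` gives the matrix for `s + 1`, which makes the expansion
along the first row recursive. -/
def thColShift (a : ℕ → ℤ) (s n : ℕ) : Matrix (Fin n) (Fin n) ℤ :=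
  of fun i j =>
    if (j : ℕ) = 0 then a (i + 1 + s) else if (j : ℕ) ≤ i + 1 then a (i + 1 - j) else 0

lemma THdet_eq_det_thColShift (a : ℕ → ℤ) (n : ℕ) : THdet a n = (thColShift a 0 n).det := by
  unfold THdet thColShift
  congr 1
  ext i j
  by_cases hj : (j : ℕ) = 0 <;> simp [hj]

lemma det_thColShift_add_two (a : ℕ → ℤ) (s n : ℕ) :
    (thColShift a s (n + 2)).det =
      a (s + 1) * THdet a (n + 1) - a 0 * (thColShift a (s + 1) (n + 1)).det := by
  have minor₀ : (thColShift a s (n + 2)).submatrix Fin.succ (Fin.succAbove 0) =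
      thColShift a 0 (n + 1) := by
    ext i ⟨_ | j, hj⟩ <;> simp [thColShift, Nat.add_sub_add_right]
  have minor₁ : (thColShift a s (n + 2)).submatrix Fin.succ (Fin.succAbove 1) =
      thColShift a (s + 1) (n + 1) := by
    ext i ⟨_ | j, hj⟩ <;> simp [thColShift, Fin.succAbove, add_assoc, add_comm s 1]
  rw [det_succ_row_zero, Fin.sum_univ_succ, Fin.sum_univ_succ, Finset.sum_eq_zero,
    Fin.succ_zero_eq_one, minor₀, minor₁, THdet_eq_det_thColShift]
  · have entry₀ : thColShift a s (n + 2) 0 0 = a (s + 1) := by simp [thColShift, add_comm]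
    have entry₁ : thColShift a s (n + 2) 0 1 = a 0 := by simp [thColShift]
    simp only [entry₀, entry₁, Fin.val_zero, Fin.val_one, pow_zero, pow_one]
    ring
  · intro j _
    simp [thColShift]

lemma det_thColShift_succ (a : ℕ → ℤ) (n s : ℕ) :
    (thColShift a s (n + 1)).det =
      ∑ i ∈ range (n + 1), (-a 0) ^ i * a (s + i + 1) * THdet a (n - i) := by
  induction n generalizing s with
  | zero => simp [thColShift, THdet, add_comm]
  | succ n ih =>
    rw [det_thColShift_add_two, ih, sum_range_succ' _ (n + 1), mul_sum, sub_eq_add_neg,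
      ← sum_neg_distrib, add_comm]
    congr 1
    · refine sum_congr rfl fun i _ => ?_
      rw [Nat.add_sub_add_right]
      ring_nf
    · simp

theorem THdet_succ (a : ℕ → ℤ) (n : ℕ) :
    THdet a (n + 1) = ∑ i ∈ range (n + 1), (-a 0) ^ i * a (i + 1) * THdet a (n - i) := by
  simpa [← THdet_eq_det_thColShift] using det_thColShift_succ a n 0

section GeneratingFunctions

variable {R : Type*} [CommRing R]

lemma one_sub_X_mul_mk_mul_mk {f d : ℕ → R} (h0 : d 0 = 1)
    (hd : ∀ n, d (n + 1) = ∑ i ∈ range (n + 1), f i * d (n - i)) :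
    (1 - X * PowerSeries.mk f) * PowerSeries.mk d = 1 := by
  ext (_ | n)
  · simp [h0]
  · rw [sub_mul, one_mul, mul_assoc, map_sub, coeff_succ_X_mul, coeff_mul,
      Nat.sum_antidiagonal_eq_sum_range_succ
        (fun i j => coeff i (PowerSeries.mk f) * coeff j (PowerSeries.mk d))]
    simp [hd]

lemma one_sub_two_mul_X_mul_mk_two_pow :
    (1 - 2 * X) * PowerSeries.mk (fun n => (2 : R) ^ n) = 1 := by
  ext (_ | n)
  · simp
  · rw [sub_mul, one_mul, mul_assoc, two_mul, map_sub, map_add, coeff_succ_X_mul, coeff_mk,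
      coeff_mk, coeff_one, if_neg n.succ_ne_zero, pow_succ]
    ring

lemma mk_mul_one_sub_X_mul_geom_sum {r : ℕ} (hr : 1 ≤ r) {F : ℕ → R}
    (hF0 : ∀ k, k < r - 1 → F k = 0) (hF1 : F (r - 1) = 1)
    (hFrec : ∀ n, r ≤ n → F n = ∑ j ∈ Icc 1 r, F (n - j)) :
    PowerSeries.mk F * (1 - X * ∑ i ∈ range r, X ^ i) = X ^ (r - 1) := by
  ext n
  have hsum : coeff n (PowerSeries.mk F * (X * ∑ i ∈ range r, X ^ i)) =
      ∑ i ∈ range r, if i + 1 ≤ n then F (n - (i + 1)) else 0 := by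
    rw [mul_sum, mul_sum, map_sum]
    refine sum_congr rfl fun i _ => ?_
    rw [← pow_succ', mul_comm, coeff_X_pow_mul', coeff_mk]
  rw [mul_sub, mul_one, map_sub, hsum, coeff_mk, coeff_X_pow]
  rcases lt_or_ge n r with hn | hn
  · rw [sum_eq_zero fun i _ => ?_]
    · rcases eq_or_ne n (r - 1) with rfl | hne
      · simp [hF1]
      · simp [hne, hF0 n (by omega)]
    · split_ifs with h
      · exact hF0 _ (by omega)
      · rfl
  · rw [hFrec n hn, ← Ico_add_one_right_eq_Icc, sum_Ico_eq_sum_range, add_tsub_cancel_right,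
      if_neg (by omega), sub_eq_zero]
    refine sum_congr (by simp) fun i hi => ?_
    rw [if_pos (by have := mem_range.1 hi; omega), add_comm]

lemma mk_mul_one_sub_X_pow {r : ℕ} (hr : 1 ≤ r) {F d : ℕ → R}
    (hF0 : ∀ k, k < r - 1 → F k = 0) (hF1 : F (r - 1) = 1)
    (hFrec : ∀ n, r ≤ n → F n = ∑ j ∈ Icc 1 r, F (n - j)) (h0 : d 0 = 1)
    (hd : ∀ n, d (n + 1) = ∑ i ∈ range (n + 1), F i * d (n - i)) :
    PowerSeries.mk d * (1 - X ^ r) = 1 + X ^ (r + 1) * PowerSeries.mk (fun n => (2 : R) ^ n) := by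
  set D := PowerSeries.mk d
  set G := ∑ i ∈ range r, (X : R⟦X⟧) ^ i
  set E := PowerSeries.mk (fun n => (2 : R) ^ n)
  have hD := one_sub_X_mul_mk_mul_mk h0 hd
  have hF := mk_mul_one_sub_X_mul_geom_sum hr hF0 hF1 hFrec
  have hG : G * (X - 1) = X ^ r - 1 := geom_sum_mul X r
  have hE : (1 - 2 * X) * E = 1 := one_sub_two_mul_X_mul_mk_two_pow
  have hXr : X * X ^ (r - 1) = (X ^ r : R⟦X⟧) := by rw [← pow_succ', Nat.sub_add_cancel hr]
  have hDP : D * (1 - X * G - X ^ r) = 1 - X * G := by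
    linear_combination (1 - X * G) * hD + X * D * hF + D * hXr
  have hD2 : D * ((1 - 2 * X) * (1 - X ^ r)) = (1 - 2 * X) + X ^ (r + 1) := by
    linear_combination (1 - X) * hDP + X * (1 - D) * hG
  linear_combination E * hD2 + (1 - D * (1 - X ^ r)) * hE

lemma sub_eq_of_mk_mul_one_sub_X_pow {d : ℕ → R} {r : ℕ}
    (h : PowerSeries.mk d * (1 - X ^ r) = 1 + X ^ (r + 1) * PowerSeries.mk (fun n => (2 : R) ^ n))
    (m : ℕ) :
    d m - (if r ≤ m then d (m - r) else 0) =
      (if m = 0 then 1 else 0) + if r + 1 ≤ m then 2 ^ (m - (r + 1)) else 0 := by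
  simpa [mul_sub, mul_comm _ (X ^ _), coeff_X_pow_mul', coeff_one] using congrArg (coeff m) h

lemma eq_ite_of_mk_mul_one_sub_X_pow {d : ℕ → R} {r : ℕ} (h0 : d 0 = 1)
    (h : PowerSeries.mk d * (1 - X ^ r) = 1 + X ^ (r + 1) * PowerSeries.mk (fun n => (2 : R) ^ n))
    {m : ℕ} (hm : 1 ≤ m) (hmr : m ≤ r) : d m = if m = r then 1 else 0 := by
  have hcoeff := sub_eq_of_mk_mul_one_sub_X_pow h m
  rcases hmr.eq_or_lt with rfl | hlt
  · simpa [h0, sub_eq_zero, show m ≠ 0 by omega] using hcoeff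
  · simpa [hlt.ne, not_le.2 hlt, show m ≠ 0 by omega, show ¬ r + 1 ≤ m by omega] using hcoeff

lemma add_eq_of_mk_mul_one_sub_X_pow {d : ℕ → R} {r : ℕ}
    (h : PowerSeries.mk d * (1 - X ^ r) = 1 + X ^ (r + 1) * PowerSeries.mk (fun n => (2 : R) ^ n))
    {n : ℕ} (hn : 1 ≤ n) : d (n + r) = d n + 2 ^ (n - 1) := by
  have hcoeff := sub_eq_of_mk_mul_one_sub_X_pow h (n + r)
  rwa [if_pos (by omega), if_neg (by omega), if_pos (by omega), Nat.add_sub_cancel,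
    show n + r - (r + 1) = n - 1 by omega, zero_add, sub_eq_iff_eq_add'] at hcoeff

end GeneratingFunctions

lemma floor_two_pow_div_of_le {r m : ℕ} (hm : 1 ≤ m) (hmr : m ≤ r) :
    ⌊((2 : ℚ) ^ m + 2 ^ r - 2) / (2 ^ (r + 1) - 2)⌋ = if m = r then 1 else 0 := by
  have hm2 : (2 : ℚ) ≤ 2 ^ m := le_self_pow₀ one_le_two (by omega)
  have hden : (2 : ℚ) ^ (r + 1) - 2 = 2 ^ r + 2 ^ r - 2 := by ring
  split_ifs with h
  · subst h
    rw [hden, div_self (by linarith), Int.floor_one]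
  · have hlt : (2 : ℚ) ^ m < 2 ^ r := pow_lt_pow_right₀ one_lt_two (by omega)
    rw [Int.floor_eq_zero_iff, hden]
    exact ⟨div_nonneg (by linarith) (by linarith), (div_lt_one (by linarith)).2 (by linarith)⟩

lemma floor_two_pow_add_div {r n : ℕ} (hr : 1 ≤ r) (hn : 1 ≤ n) :
    ⌊((2 : ℚ) ^ (n + r) + 2 ^ r - 2) / (2 ^ (r + 1) - 2)⌋ =
      ⌊((2 : ℚ) ^ n + 2 ^ r - 2) / (2 ^ (r + 1) - 2)⌋ + 2 ^ (n - 1) := by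
  obtain ⟨k, rfl⟩ := Nat.exists_eq_add_of_le' hn
  have hden : (2 : ℚ) ^ (r + 1) - 2 ≠ 0 := by
    have : (4 : ℚ) ≤ 2 ^ (r + 1) :=
      calc (4 : ℚ) = 2 ^ 2 := by norm_num
      _ ≤ 2 ^ (r + 1) := pow_le_pow_right₀ one_le_two (by omega)
    linarith
  rw [← Int.floor_add_intCast, Nat.add_sub_cancel]
  congr 1
  field_simp
  push_cast
  ring

lemma eq_of_eqOn_Icc_of_sub_eq {G : Type*} [AddGroup G] {u v : ℕ → G} {r : ℕ} (hr : 1 ≤ r)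
    (hbase : ∀ m, 1 ≤ m → m ≤ r → u m = v m)
    (hstep : ∀ n, 1 ≤ n → u (n + r) - u n = v (n + r) - v n) :
    ∀ m, 1 ≤ m → u m = v m := by
  intro m
  induction m using Nat.strong_induction_on with
  | _ m ih =>
    intro hm
    by_cases hmr : m ≤ r
    · exact hbase m hm hmr
    · obtain ⟨n, rfl⟩ : ∃ n, m = n + r := ⟨m - r, by omega⟩
      have hn := hstep n (by omega)
      rwa [ih n (by omega) (by omega), sub_left_inj] at hn

theorem stmt_19 (r : ℕ) (hr : 2 ≤ r) (F : ℕ → ℤ)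
    (hF0 : ∀ k, k < r - 1 → F k = 0) (hF1 : F (r - 1) = 1)
    (hFrec : ∀ n, r ≤ n → F n = ∑ j ∈ Finset.Icc 1 r, F (n - j))
    (n : ℕ) (hn : 1 ≤ n) :
    THdet (fun k => if k = 0 then -1 else F (k - 1)) n =
      ⌊((2 : ℚ) ^ n + 2 ^ r - 2) / (2 ^ (r + 1) - 2)⌋ := by
  set D := THdet (fun k => if k = 0 then -1 else F (k - 1))
  have hr₁ : 1 ≤ r := by omega
  have hD0 : D 0 = 1 := by simp [D, THdet]
  have hgf := mk_mul_one_sub_X_pow hr₁ hF0 hF1 hFrec hD0 fun n => by simp [D, THdet_succ]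
  refine eq_of_eqOn_Icc_of_sub_eq (u := D)
    (v := fun m => ⌊((2 : ℚ) ^ m + 2 ^ r - 2) / (2 ^ (r + 1) - 2)⌋) hr₁
    (fun m hm hmr => ?_) (fun m hm => ?_) n hn
  · rw [eq_ite_of_mk_mul_one_sub_X_pow hD0 hgf hm hmr, floor_two_pow_div_of_le hm hmr]
  · rw [add_eq_of_mk_mul_one_sub_X_pow hgf hm, floor_two_pow_add_div hr₁ hm]
    ring
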